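/- arXiv:2101.02620 — 4 statements merged into one kernel-verified Lean document; each statement's English description precedes it below -/
import Mathlib

section
/- Let M_ν be a densely defined multiplication operator from a vector valued RKHS H (functions X → Y) to a scalar valued RKHS H̃ over X, with continuous symbol ν : X → Y. Then for every x ∈ X, the kernel function K̃(·, x) of H̃ lies in the domain of M_ν*, and M_ν* K̃(·, x) = K_{x, ν(x)}. -/
open scoped RealInnerProductSpace

/-- Let `M_ν` be a densely defined multiplication operator, with continuous
symbol `ν : X → Y`, from a vvRKHS `H` of `Y`-valued functions on `X` to a scalar RKHS `H̃`
over `X`. Then for every `x ∈ X`, the kernel `K̃(·,x)` lies in the domain of `M_ν^*` (i.e. the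
functional `h ↦ ⟪M_ν h, K̃(·,x)⟫` is bounded on the domain) and `M_ν^* K̃(·,x) = K_{x,ν(x)}`. -/
theorem multiplication_adjoint_on_kernels
    {X : Type*} [TopologicalSpace X] {Y Ht H : Type*}
    [NormedAddCommGroup Y] [InnerProductSpace ℝ Y] [CompleteSpace Y]
    [NormedAddCommGroup Ht] [InnerProductSpace ℝ Ht] [CompleteSpace Ht]
    [NormedAddCommGroup H] [InnerProductSpace ℝ H] [CompleteSpace H]
    -- scalar RKHS `H̃` over `X` with kernel `K̃`
    (evt : Ht →ₗ[ℝ] (X → ℝ))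
    (Kt : X → Ht)
    (hKt : ∀ (x : X) (h : Ht), ⟪h, Kt x⟫ = evt h x)
    -- vvRKHS `H` of `Y`-valued functions on `X` with kernels `K_{x,v}`
    (ev : H →ₗ[ℝ] (X → Y))
    (K : X → Y → H)
    (hK : ∀ (x : X) (v : Y) (h : H), ⟪h, K x v⟫ = ⟪ev h x, v⟫)
    -- continuous symbol `ν`
    (ν : X → Y) (hν : Continuous ν)
    -- the multiplication operator `M_ν` with its (dense) domain `D`
    (D : Submodule ℝ H) (hdense : D.topologicalClosure = ⊤)
    (hD : ∀ h : H, h ∈ D ↔ ∃ q : Ht, ∀ x : X, evt q x = ⟪ev h x, ν x⟫)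
    (M : D →ₗ[ℝ] Ht)
    (hM : ∀ (h : H) (hh : h ∈ D) (x : X), evt (M ⟨h, hh⟩) x = ⟪ev h x, ν x⟫) :
    ∀ x : X,
      (∃ C : ℝ, ∀ h : D, |⟪M h, Kt x⟫| ≤ C * ‖(h : H)‖) ∧
      ∀ h : D, ⟪M h, Kt x⟫ = ⟪(h : H), K x (ν x)⟫ := by
  intro x
  have key : ∀ h : D, ⟪M h, Kt x⟫ = ⟪(h : H), K x (ν x)⟫ := by
    intro h
    rw [hKt, hK]
    have := hM h.1 h.2 x
    simpa using this
  refine ⟨⟨‖K x (ν x)‖, fun h => ?_⟩, key⟩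
  rw [key h]
  rw [mul_comm]
  exact abs_real_inner_le_norm _ _
end

section
/- Let μ : X → ℝ^m be continuous, set ν(x) = (1, μ(x)ᵀ) ∈ ℝ^{1×(m+1)}, and assume the multiplication operator M_ν : D(M_ν) ⊆ H → H̃ is densely defined. Let γ : [0,T] → X be continuous with occupation kernel Γ_γ ∈ H̃, and suppose the control occupation kernel Γ_{γ, μ∘γ} ∈ H exists with finite norm. Then Γ_γ ∈ D(M_ν*) and M_ν* Γ_γ = Γ_{γ, μ∘γ}. -/
open MeasureTheory
open scoped RealInnerProductSpace

/-- The augmented feedback vector `(1, μ(x)ᵀ) ∈ ℝ^{1×(m+1)}` built from `μ(x) ∈ ℝ^m`. -/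
noncomputable def aug {m : ℕ} (u : EuclideanSpace ℝ (Fin m)) :
    EuclideanSpace ℝ (Fin (m + 1)) :=
  (WithLp.equiv 2 (Fin (m + 1) → ℝ)).symm
    (Fin.cons 1 ((WithLp.equiv 2 (Fin m → ℝ)) u))

/-- Let `μ : X → ℝ^m` be continuous, `ν(x) = (1, μ(x)ᵀ)`, and suppose the
multiplication operator `M_ν : D(M_ν) ⊆ H → H̃` is densely defined. Let `Γ_γ ∈ H̃` be the
occupation kernel of a continuous `γ : [0,T] → X`, and suppose the control occupation kernel
`Γ_{γ,μ∘γ} ∈ H` exists (with finite norm). Then `Γ_γ ∈ D(M_ν^*)` (the functional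
`h ↦ ⟪M_ν h, Γ_γ⟫` is bounded on the domain) and `M_ν^* Γ_γ = Γ_{γ,μ∘γ}`. -/
theorem multiplication_adjoint_on_occupation_kernels
    {m : ℕ} {X : Type*} [TopologicalSpace X] {Ht H : Type*}
    [NormedAddCommGroup Ht] [InnerProductSpace ℝ Ht] [CompleteSpace Ht]
    [NormedAddCommGroup H] [InnerProductSpace ℝ H] [CompleteSpace H]
    -- scalar RKHS `H̃` over `X`
    (evt : Ht →ₗ[ℝ] (X → ℝ))
    (Kt : X → Ht)
    (hKt : ∀ (x : X) (q : Ht), ⟪q, Kt x⟫ = evt q x)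
    -- vvRKHS `H` of `ℝ^{1×(m+1)}`-valued functions on `X`
    (ev : H →ₗ[ℝ] (X → EuclideanSpace ℝ (Fin (m + 1))))
    (K : X → EuclideanSpace ℝ (Fin (m + 1)) → H)
    (hK : ∀ x v (p : H), ⟪p, K x v⟫ = ⟪ev p x, v⟫)
    -- continuous feedback `μ` and its augmented symbol `ν(x) = (1, μ(x)ᵀ)`
    (μ : X → EuclideanSpace ℝ (Fin m)) (hμ : Continuous μ)
    -- the multiplication operator `M_ν` with dense domain `D`
    (D : Submodule ℝ H) (hdense : D.topologicalClosure = ⊤)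
    (hD : ∀ p : H, p ∈ D ↔ ∃ q : Ht, ∀ x : X, evt q x = ⟪ev p x, aug (μ x)⟫)
    (M : D →ₗ[ℝ] Ht)
    (hM : ∀ (p : H) (hp : p ∈ D) (x : X), evt (M ⟨p, hp⟩) x = ⟪ev p x, aug (μ x)⟫)
    -- a continuous trajectory `γ : [0,T] → X`
    (T : ℝ) (hT : 0 ≤ T)
    (γ : ℝ → X) (hγ : ContinuousOn γ (Set.Icc 0 T))
    -- the occupation kernel `Γ_γ` in `H̃`
    (Γt : Ht)
    (hΓt : ∀ q : Ht, ⟪q, Γt⟫ = ∫ t in (0 : ℝ)..T, evt q (γ t))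
    -- the control occupation kernel `Γ_{γ,μ∘γ}` in `H`
    (Γ : H)
    (hΓ : ∀ p : H, ⟪p, Γ⟫ = ∫ t in (0 : ℝ)..T, ⟪ev p (γ t), aug (μ (γ t))⟫) :
    (∃ C : ℝ, ∀ p : D, |⟪M p, Γt⟫| ≤ C * ‖(p : H)‖) ∧
    ∀ p : D, ⟪M p, Γt⟫ = ⟪(p : H), Γ⟫ := by
  have key : ∀ p : D, ⟪M p, Γt⟫ = ⟪(p : H), Γ⟫ := by
    intro p
    rw [hΓt, hΓ]
    refine intervalIntegral.integral_congr fun t _ => ?_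
    obtain ⟨q, hq⟩ := p
    exact hM q hq (γ t)
  refine ⟨⟨‖Γ‖, fun p => ?_⟩, key⟩
  rw [key p]
  calc |⟪(p : H), Γ⟫| ≤ ‖(p : H)‖ * ‖Γ‖ := abs_real_inner_le_norm _ _
    _ = ‖Γ‖ * ‖(p : H)‖ := mul_comm _ _
end

section
/- Let φ₁, φ₂, … be eigenfunctions of M_ν A_{f,g} with eigenvalues λ₁, λ₂, …, and suppose the identity function g_id(x) = x admits a pointwise-convergent expansion g_id(x) = Σ_i ξ_i φ_i(x) with ξ_i ∈ ℝⁿ, convergence being uniform on compact sets. Then any bounded solution γ_μ of the closed-loop system ẋ = f(x) + g(x)μ(x) satisfies γ_μ(t) = Σ_i ξ_i φ_i(γ_μ(0)) e^{λ_i t}. -/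
/-!
Along a closed-loop trajectory each eigenfunction obeys the scalar linear ODE
`d/dt φᵢ(γ t) = λᵢ φᵢ(γ t)`, hence `φᵢ(γ t) = e^{λᵢ t} φᵢ(γ 0)`; substituting this into the
expansion of the identity at the point `γ t` gives the reconstruction formula.
-/

open Set

section

variable {E F : Type*} [NormedAddCommGroup E] [NormedSpace ℝ E]
  [NormedAddCommGroup F] [NormedSpace ℝ F]

theorem eq_exp_mul_smul_of_hasDerivAt_eq_smul {u : ℝ → F} {c a : ℝ}
    (hu : ∀ s ∈ Ici a, HasDerivAt u (c • u s) s) :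
    ∀ t ∈ Ici a, u t = Real.exp (c * (t - a)) • u a := by
  intro t ht
  let w : ℝ → F := fun s => Real.exp (-c * (s - a)) • u s
  have hw_deriv : ∀ s ∈ Ici a, HasDerivAt w 0 s := by
    intro s hs
    have hexp : HasDerivAt (fun s => Real.exp (-c * (s - a))) (Real.exp (-c * (s - a)) * -c) s :=
      by simpa using (((hasDerivAt_id s).sub_const a).const_mul (-c)).exp
    have h := hexp.smul (hu s hs)
    rwa [smul_smul, ← add_smul, mul_neg, add_neg_cancel, zero_smul] at h
  have hw_const : w t = w a :=
    constant_of_has_deriv_right_zero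
      (fun s hs => (hw_deriv s hs.1).continuousAt.continuousWithinAt)
      (fun s hs => (hw_deriv s hs.1).hasDerivWithinAt) t (right_mem_Icc.2 ht)
  calc u t = Real.exp (c * (t - a)) • w t := by
        rw [smul_smul, ← Real.exp_add, neg_mul, add_neg_cancel, Real.exp_zero, one_smul]
    _ = Real.exp (c * (t - a)) • u a := by
        simp only [hw_const, w, sub_self, mul_zero, Real.exp_zero, one_smul]

theorem HasDerivAt.comp_of_fderiv_apply_eq_smul {φ : E → F} {v : E} {lam : ℝ}
    {γ : ℝ → E} {s : ℝ} (hφ : DifferentiableAt ℝ φ (γ s))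
    (heig : fderiv ℝ φ (γ s) v = lam • φ (γ s)) (hγ : HasDerivAt γ v s) :
    HasDerivAt (fun s => φ (γ s)) (lam • φ (γ s)) s :=
  (hφ.hasFDerivAt.comp_hasDerivAt s hγ).congr_deriv heig

theorem eigenfunction_comp_eq_exp_mul_smul {φ : E → F} {V : E → E} {lam a : ℝ} {γ : ℝ → E}
    (hφ : Differentiable ℝ φ) (heig : ∀ x, fderiv ℝ φ x (V x) = lam • φ x)
    (hγ : ∀ s ∈ Ici a, HasDerivAt γ (V (γ s)) s) :
    ∀ t ∈ Ici a, φ (γ t) = Real.exp (lam * (t - a)) • φ (γ a) :=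
  eq_exp_mul_smul_of_hasDerivAt_eq_smul fun s hs =>
    (hγ s hs).comp_of_fderiv_apply_eq_smul (hφ _) (heig _)

end

theorem dynamic_mode_decomposition_reconstruction_general
    {n m : ℕ}
    (f : EuclideanSpace ℝ (Fin n) → EuclideanSpace ℝ (Fin n))
    (g : EuclideanSpace ℝ (Fin n) → Fin m → EuclideanSpace ℝ (Fin n))
    (μ : EuclideanSpace ℝ (Fin n) → EuclideanSpace ℝ (Fin m))
    -- eigenfunctions `φ i` with eigenvalues `lam i`
    (φ : ℕ → EuclideanSpace ℝ (Fin n) → ℝ) (hφ : ∀ i, ContDiff ℝ 1 (φ i))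
    (lam : ℕ → ℝ)
    (heig : ∀ (i : ℕ) (x), fderiv ℝ (φ i) x
      (f x + ∑ j, (WithLp.equiv 2 (Fin m → ℝ)) (μ x) j • g x j) = lam i * φ i x)
    -- modes `ξ i ∈ ℝⁿ` expanding the identity function, pointwise...
    (ξ : ℕ → EuclideanSpace ℝ (Fin n))
    (hexp : ∀ x : EuclideanSpace ℝ (Fin n), HasSum (fun i : ℕ => φ i x • ξ i) x)
    -- `γ` is a bounded C¹ solution of the closed-loop system on `[0,∞)`
    (γ : ℝ → EuclideanSpace ℝ (Fin n))
    (hγ : ∀ t ∈ Set.Ici (0 : ℝ), HasDerivAt γ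
      (f (γ t) + ∑ j, (WithLp.equiv 2 (Fin m → ℝ)) (μ (γ t)) j • g (γ t) j) t) :
    ∀ t ∈ Set.Ici (0 : ℝ),
      HasSum (fun i : ℕ => (Real.exp (lam i * t) * φ i (γ 0)) • ξ i) (γ t) := by
  intro t ht
  have hevol : ∀ i, φ i (γ t) = Real.exp (lam i * t) * φ i (γ 0) := fun i => by
    simpa only [sub_zero, smul_eq_mul] using
      eigenfunction_comp_eq_exp_mul_smul ((hφ i).differentiable one_ne_zero) (heig i) hγ t ht
  simpa only [hevol] using hexp (γ t)

/-- If `φ₁, φ₂, …` are eigenfunctions of the closed-loop operator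
`M_ν A_{f,g}` (i.e. `∇φ_i·(f + gμ) = λ_i φ_i`) with eigenvalues `λ_i`, and the identity map
`g_id(x) = x` admits an expansion `x = Σ_i φ_i(x) ξ_i` (pointwise, uniformly convergent on
compact sets), then any bounded closed-loop solution `γ_μ` of `ẋ = f(x) + g(x)μ(x)` satisfies
`γ_μ(t) = Σ_i ξ_i φ_i(γ_μ(0)) e^{λ_i t}`. -/
theorem dynamic_mode_decomposition_reconstruction
    {n m : ℕ}
    (f : EuclideanSpace ℝ (Fin n) → EuclideanSpace ℝ (Fin n))
    (g : EuclideanSpace ℝ (Fin n) → Fin m → EuclideanSpace ℝ (Fin n))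
    (μ : EuclideanSpace ℝ (Fin n) → EuclideanSpace ℝ (Fin m))
    (hf : LocallyLipschitz f) (hg : LocallyLipschitz g) (hμ : LocallyLipschitz μ)
    -- eigenfunctions `φ i` with eigenvalues `lam i`
    (φ : ℕ → EuclideanSpace ℝ (Fin n) → ℝ) (hφ : ∀ i, ContDiff ℝ 1 (φ i))
    (lam : ℕ → ℝ)
    (heig : ∀ (i : ℕ) (x), fderiv ℝ (φ i) x
      (f x + ∑ j, (WithLp.equiv 2 (Fin m → ℝ)) (μ x) j • g x j) = lam i * φ i x)
    -- modes `ξ i ∈ ℝⁿ` expanding the identity function, pointwise...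
    (ξ : ℕ → EuclideanSpace ℝ (Fin n))
    (hexp : ∀ x : EuclideanSpace ℝ (Fin n), HasSum (fun i : ℕ => φ i x • ξ i) x)
    -- ...with convergence uniform on compact sets
    (hunif : ∀ C : Set (EuclideanSpace ℝ (Fin n)), IsCompact C →
      TendstoUniformlyOn (fun (N : ℕ) (x : EuclideanSpace ℝ (Fin n)) =>
        ∑ i ∈ Finset.range N, φ i x • ξ i) (fun x => x) Filter.atTop C)
    -- `γ` is a bounded C¹ solution of the closed-loop system on `[0,∞)`
    (γ : ℝ → EuclideanSpace ℝ (Fin n))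
    (hγ : ∀ t ∈ Set.Ici (0 : ℝ), HasDerivAt γ
      (f (γ t) + ∑ j, (WithLp.equiv 2 (Fin m → ℝ)) (μ (γ t)) j • g (γ t) j) t)
    (hγ_bdd : ∃ B : ℝ, ∀ t ∈ Set.Ici (0 : ℝ), ‖γ t‖ ≤ B) :
    ∀ t ∈ Set.Ici (0 : ℝ),
      HasSum (fun i : ℕ => (Real.exp (lam i * t) * φ i (γ 0)) • ξ i) (γ t) :=
  dynamic_mode_decomposition_reconstruction_general f g μ φ hφ lam heig ξ hexp γ hγ
end

section
/- Let Γ_{γ_{u_i},u_i} and Γ_{γ_{u_j},u_j} be control occupation kernels in a vector valued RKHS H with kernel operator K. Then ⟨Γ_{γ_{u_i},u_i}, Γ_{γ_{u_j},u_j}⟩_H = ∫₀^{T_j} ∫₀^{T_i} (1, u_i(τ)ᵀ) K(γ_{u_j}(t), γ_{u_i}(τ)) (1, u_j(t))ᵀ dτ dt. -/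
open MeasureTheory
open scoped RealInnerProductSpace

/-- For control occupation kernels `Γ_{γᵢ,uᵢ}` and `Γ_{γⱼ,uⱼ}` in a vvRKHS `H`
with kernel operator `K` (where `K(x,y)v = K_{x,v}(y)`),
`⟪Γ_{γᵢ,uᵢ}, Γ_{γⱼ,uⱼ}⟫_H
  = ∫₀^{Tⱼ} ∫₀^{Tᵢ} (1, uᵢ(τ)ᵀ) K(γⱼ(t), γᵢ(τ)) (1, uⱼ(t))ᵀ dτ dt`. -/
theorem control_occupation_kernel_gram
    {n m : ℕ} {H : Type*}
    [NormedAddCommGroup H] [InnerProductSpace ℝ H] [CompleteSpace H]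
    (ev : H →ₗ[ℝ] (EuclideanSpace ℝ (Fin n) → EuclideanSpace ℝ (Fin (m + 1))))
    (K : EuclideanSpace ℝ (Fin n) → EuclideanSpace ℝ (Fin (m + 1)) → H)
    (hK : ∀ x v (p : H), ⟪p, K x v⟫ = ⟪ev p x, v⟫)
    (Ti Tj : ℝ) (hTi : 0 ≤ Ti) (hTj : 0 ≤ Tj)
    -- bounded measurable controls
    (ui uj : ℝ → EuclideanSpace ℝ (Fin m))
    (hui_meas : Measurable ui) (huj_meas : Measurable uj)
    (hui_bdd : ∃ C : ℝ, ∀ t ∈ Set.Icc (0 : ℝ) Ti, ‖ui t‖ ≤ C)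
    (huj_bdd : ∃ C : ℝ, ∀ t ∈ Set.Icc (0 : ℝ) Tj, ‖uj t‖ ≤ C)
    -- continuous (absolutely continuous) trajectories
    (γi γj : ℝ → EuclideanSpace ℝ (Fin n))
    (hγi : ContinuousOn γi (Set.Icc 0 Ti)) (hγj : ContinuousOn γj (Set.Icc 0 Tj))
    -- control occupation kernels
    (Γi Γj : H)
    (hΓi : ∀ p : H, ⟪p, Γi⟫ = ∫ t in (0 : ℝ)..Ti, ⟪ev p (γi t), aug (ui t)⟫)
    (hΓj : ∀ p : H, ⟪p, Γj⟫ = ∫ t in (0 : ℝ)..Tj, ⟪ev p (γj t), aug (uj t)⟫) :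
    ⟪Γi, Γj⟫ = ∫ t in (0 : ℝ)..Tj, ∫ τ in (0 : ℝ)..Ti,
      ⟪ev (K (γj t) (aug (uj t))) (γi τ), aug (ui τ)⟫ := by
  rw [hΓj Γi]
  refine intervalIntegral.integral_congr fun t ht => ?_
  rw [← hK (γj t) (aug (uj t)) Γi, real_inner_comm, hΓi]
end
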